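/- arXiv:2107.08476 — 6 statements merged into one kernel-verified Lean document; each statement's English description precedes it below -/
import Mathlib

section
/- Let G be a (P₃ ∪ 2P₁)-free graph and S ⊆ V(G) a set such that G − S has at least three connected components. Then every connected component of G − S is a complete graph. -/
/-!
Suppose two distinct vertices `u, v` of one component of `G − S` are not adjacent. A shortest
`u`–`v` path then starts with an induced path `x y z`. Picking one vertex in each of two further
components of `G − S`, these two vertices are non-adjacent to each other and to `x, y, z`, so the
five vertices induce `P₃ ∪ 2P₁`.
-/

open SimpleGraph

/-- The number of connected components of `G − S`. -/
noncomputable def numComp {V : Type*} (G : SimpleGraph V) (S : Set V) : ℕ :=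
  Nat.card (G.induce Sᶜ).ConnectedComponent

/-- `G` is `t`-tough: every cutset `S` satisfies `|S| ≥ t · c(G − S)`. -/
def Tough {V : Type*} (t : ℝ) (G : SimpleGraph V) : Prop :=
  ∀ S : Set V, 2 ≤ numComp G S → t * (numComp G S : ℝ) ≤ (S.ncard : ℝ)

/-- `G` contains no induced copy of `H`. -/
def InducedFree {W V : Type*} (H : SimpleGraph W) (G : SimpleGraph V) : Prop :=
  ¬ ∃ f : W ↪ V, ∀ a b : W, G.Adj (f a) (f b) ↔ H.Adj a b

/-- `P₃ ∪ P₁`: a path on three vertices plus one isolated vertex. -/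
def P3UnionP1 : SimpleGraph (Fin 4) := SimpleGraph.fromEdgeSet {s(0, 1), s(1, 2)}

/-- `P₃ ∪ 2P₁`: a path on three vertices plus two isolated vertices. -/
def P3Union2P1 : SimpleGraph (Fin 5) := SimpleGraph.fromEdgeSet {s(0, 1), s(1, 2)}

section

variable {V : Type*}

lemma InducedFree.induce {W : Type*} {H : SimpleGraph W} {G : SimpleGraph V}
    (hfree : InducedFree H G) (s : Set V) : InducedFree H (G.induce s) :=
  fun ⟨f, hf⟩ ↦ hfree ⟨f.trans (Function.Embedding.subtype _), hf⟩

lemma exists_ne_ne_ne_of_three_le_natCard {α : Type*} (h : 3 ≤ Nat.card α) (c : α) :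
    ∃ a b : α, a ≠ c ∧ b ≠ c ∧ a ≠ b := by
  have : Finite α := Nat.finite_of_card_ne_zero (by omega)
  have : Fintype α := Fintype.ofFinite α
  classical
  obtain ⟨a, ha, b, hb, hab⟩ := Finset.one_lt_card.mp <| show 1 < (Finset.univ.erase c).card by
    rw [Finset.card_erase_of_mem (Finset.mem_univ c), Finset.card_univ, ← Nat.card_eq_fintype_card]
    omega
  exact ⟨a, b, Finset.ne_of_mem_erase ha, Finset.ne_of_mem_erase hb, hab⟩

namespace SimpleGraph

lemma Reachable.exists_adj_adj_not_adj_ne {G : SimpleGraph V} {u v : V} (h : G.Reachable u v)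
    (hne : u ≠ v) (hnadj : ¬G.Adj u v) :
    ∃ x y z : V, G.Adj x y ∧ G.Adj y z ∧ ¬G.Adj x z ∧ x ≠ z := by
  obtain ⟨p, hp⟩ := h.exists_walk_length_eq_dist
  exact p.exists_adj_adj_not_adj_ne hp (h.one_lt_dist_of_ne_of_not_adj hne hnadj)

lemma ne_and_not_adj_of_connectedComponentMk_ne {G : SimpleGraph V} {p q : V}
    (h : G.connectedComponentMk p ≠ G.connectedComponentMk q) : p ≠ q ∧ ¬G.Adj p q :=
  ⟨fun e ↦ h (e ▸ rfl), fun hpq ↦ h (ConnectedComponent.connectedComponentMk_eq_of_adj hpq)⟩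

lemma not_inducedFree_P3Union2P1 {G : SimpleGraph V} {x y z a b : V}
    (hxy : G.Adj x y) (hyz : G.Adj y z) (hxz : ¬G.Adj x z) (hne : x ≠ z)
    (ha : G.connectedComponentMk a ≠ G.connectedComponentMk x)
    (hb : G.connectedComponentMk b ≠ G.connectedComponentMk x)
    (hab : G.connectedComponentMk a ≠ G.connectedComponentMk b) :
    ¬InducedFree P3Union2P1 G := by
  have hy := (ConnectedComponent.connectedComponentMk_eq_of_adj hxy).symm
  have hz := (ConnectedComponent.connectedComponentMk_eq_of_adj hyz).symm.trans hy
  obtain ⟨hax, hax'⟩ := ne_and_not_adj_of_connectedComponentMk_ne ha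
  obtain ⟨hay, hay'⟩ := ne_and_not_adj_of_connectedComponentMk_ne (hy ▸ ha)
  obtain ⟨haz, haz'⟩ := ne_and_not_adj_of_connectedComponentMk_ne (hz ▸ ha)
  obtain ⟨hbx, hbx'⟩ := ne_and_not_adj_of_connectedComponentMk_ne hb
  obtain ⟨hby, hby'⟩ := ne_and_not_adj_of_connectedComponentMk_ne (hy ▸ hb)
  obtain ⟨hbz, hbz'⟩ := ne_and_not_adj_of_connectedComponentMk_ne (hz ▸ hb)
  obtain ⟨hab, hab'⟩ := ne_and_not_adj_of_connectedComponentMk_ne hab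
  have hinj : Function.Injective ![x, y, z, a, b] := by
    intro i j hij
    fin_cases i <;> fin_cases j <;> simp_all [hxy.ne, hyz.ne, hxy.ne.symm, hyz.ne.symm, eq_comm]
  refine fun hfree ↦ hfree ⟨⟨_, hinj⟩, fun i j ↦ ?_⟩
  fin_cases i <;> fin_cases j <;> simp [P3Union2P1, *, hxy.symm, hyz.symm] <;>
    exact mt G.adj_symm ‹_›

end SimpleGraph

end

theorem stmt_3_general {V : Type*} (G : SimpleGraph V)
    (hfree : InducedFree P3Union2P1 G) (S : Set V) (hS : 3 ≤ numComp G S) :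
    ∀ u v : ↥(Sᶜ), u ≠ v → (G.induce Sᶜ).Reachable u v → (G.induce Sᶜ).Adj u v := by
  intro u v hne hreach
  by_contra hnadj
  obtain ⟨x, y, z, hxy, hyz, hxz, hxz'⟩ := hreach.exists_adj_adj_not_adj_ne hne hnadj
  obtain ⟨ca, cb, hca, hcb, hcab⟩ :=
    exists_ne_ne_ne_of_three_le_natCard hS ((G.induce Sᶜ).connectedComponentMk x)
  obtain ⟨a, rfl⟩ := ca.exists_rep
  obtain ⟨b, rfl⟩ := cb.exists_rep
  exact not_inducedFree_P3Union2P1 hxy hyz hxz hxz' hca hcb hcab (hfree.induce Sᶜ)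

/-- In a `(P₃ ∪ 2P₁)`-free graph, if `G − S` has at least three components then every
component of `G − S` is a complete graph. -/
theorem stmt_3 {V : Type*} [Fintype V] (G : SimpleGraph V)
    (hfree : InducedFree P3Union2P1 G) (S : Set V) (hS : 3 ≤ numComp G S) :
    ∀ u v : ↥(Sᶜ), u ≠ v → (G.induce Sᶜ).Reachable u v → (G.induce Sᶜ).Adj u v :=
  stmt_3_general G hfree S hS
end

section
/- Let G be a bipartite graph with partite sets X and Y, and let f : X → ℤ⁺ assign a positive integer to each vertex of X. If for every subset S ⊆ X we have |N_G(S)| ≥ Σ_{v∈S} f(v), then G has a subgraph H with X ⊆ V(H), d_H(v) = f(v) for every v ∈ X, and d_H(u) = 1 for every u ∈ Y ∩ V(H). -/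
/-! Replace every `x ∈ X` by `f x` clones with the neighbourhood of `x`. The hypothesis is exactly
Hall's condition for the clones, so Hall's theorem matches them injectively into `Y`; each vertex
of `X` together with the partners of its clones is the required star. -/

open SimpleGraph

open Finset in
theorem Finset.exists_injective_sigma_of_sum_le_card_biUnion {ι α : Type*} [DecidableEq α]
    (t : ι → Finset α) (f : ι → ℕ) (h : ∀ s : Finset ι, ∑ i ∈ s, f i ≤ #(s.biUnion t)) :
    ∃ g : (Σ i, Fin (f i)) → α, Function.Injective g ∧ ∀ p, g p ∈ t p.1 := by
  classical
  refine (all_card_le_biUnion_card_iff_exists_injective fun p : Σ i, Fin (f i) => t p.1).mp ?_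
  intro s
  have hsub : s ⊆ (s.image Sigma.fst).sigma fun _ => univ := fun p hp =>
    mem_sigma.mpr ⟨mem_image_of_mem _ hp, mem_univ _⟩
  calc #s ≤ #((s.image Sigma.fst).sigma fun _ => univ) := card_le_card hsub
    _ = ∑ i ∈ s.image Sigma.fst, f i := by simp only [card_sigma, card_univ, Fintype.card_fin]
    _ ≤ #(s.biUnion fun p => t p.1) := by rw [← image_biUnion]; exact h _

namespace SimpleGraph

variable {V : Type*} {G : SimpleGraph V} {X : Set V} {f : V → ℕ}

@[simps]
def starSubgraph (g : (Σ x : X, Fin (f x)) → V) (hadj : ∀ p, G.Adj p.1 (g p)) : G.Subgraph where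
  verts := X ∪ Set.range g
  Adj u v := ∃ p, s(↑p.1, g p) = s(u, v)
  adj_sub := by
    rintro u v ⟨p, hp⟩
    rcases Sym2.eq_iff.mp hp with ⟨rfl, rfl⟩ | ⟨rfl, rfl⟩
    exacts [hadj p, (hadj p).symm]
  edge_vert := by
    rintro u v ⟨p, hp⟩
    rcases Sym2.eq_iff.mp hp with ⟨rfl, -⟩ | ⟨-, rfl⟩
    exacts [Or.inl p.1.2, Or.inr ⟨p, rfl⟩]
  symm := ⟨fun _ _ ⟨p, hp⟩ => ⟨p, hp.trans Sym2.eq_swap⟩⟩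

variable {g : (Σ x : X, Fin (f x)) → V} {hadj : ∀ p, G.Adj p.1 (g p)}

theorem neighborSet_starSubgraph_of_mem (hout : ∀ p, g p ∉ X) {v : V} (hv : v ∈ X) :
    (starSubgraph g hadj).neighborSet v = Set.range (g ∘ Sigma.mk ⟨v, hv⟩) := by
  ext w
  simp only [Subgraph.mem_neighborSet, starSubgraph_adj]
  constructor
  · rintro ⟨⟨⟨x, hx⟩, j⟩, hp⟩
    rcases Sym2.eq_iff.mp hp with ⟨rfl, rfl⟩ | ⟨-, rfl⟩
    exacts [⟨j, rfl⟩, absurd hv (hout _)]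
  · rintro ⟨j, rfl⟩
    exact ⟨⟨⟨v, hv⟩, j⟩, rfl⟩

theorem neighborSet_starSubgraph_apply (hg : Function.Injective g) (hout : ∀ p, g p ∉ X)
    (p : Σ x : X, Fin (f x)) : (starSubgraph g hadj).neighborSet (g p) = {(p.1 : V)} := by
  ext w
  simp only [Subgraph.mem_neighborSet, starSubgraph_adj, Set.mem_singleton_iff]
  constructor
  · rintro ⟨q, hq⟩
    rcases Sym2.eq_iff.mp hq with ⟨hqp, -⟩ | ⟨rfl, hqp⟩
    exacts [absurd (hqp ▸ q.1.2) (hout p), by rw [hg hqp]]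
  · rintro rfl
    exact ⟨p, Sym2.eq_swap⟩

theorem exists_subgraph_stars (g : (Σ x : X, Fin (f x)) → V) (hg : Function.Injective g)
    (hadj : ∀ p, G.Adj p.1 (g p)) (hout : ∀ p, g p ∉ X) :
    ∃ H : G.Subgraph, X ⊆ H.verts ∧ (∀ v ∈ X, (H.neighborSet v).ncard = f v) ∧
      ∀ u ∈ H.verts, u ∉ X → (H.neighborSet u).ncard = 1 := by
  refine ⟨starSubgraph g hadj, by simp, fun v hv => ?_, ?_⟩
  · rw [neighborSet_starSubgraph_of_mem hout hv]
    exact (Set.ncard_range_of_injective (hg.comp sigma_mk_injective)).trans (Nat.card_fin (f v))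
  · rintro u (hu | ⟨p, rfl⟩) huX
    · exact absurd hu huX
    · rw [neighborSet_starSubgraph_apply hg hout, Set.ncard_singleton]

end SimpleGraph

theorem stmt_4_general {V : Type*} [Fintype V] (G : SimpleGraph V)
    (X Y : Finset V) (hdisj : Disjoint X Y)
    (hbip : ∀ u v : V, G.Adj u v → (u ∈ X ∧ v ∈ Y) ∨ (u ∈ Y ∧ v ∈ X))
    (f : V → ℕ)
    (hHall : ∀ S ⊆ X, (∑ v ∈ S, f v) ≤ {y : V | ∃ x ∈ S, G.Adj x y}.ncard) :
    ∃ H : G.Subgraph, ↑X ⊆ H.verts ∧ (∀ v ∈ X, (H.neighborSet v).ncard = f v) ∧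
      ∀ u ∈ H.verts, u ∈ Y → (H.neighborSet u).ncard = 1 := by
  classical
  have hall : ∀ s : Finset (X : Set V),
      ∑ x ∈ s, f x ≤ (s.biUnion fun x => G.neighborFinset x).card := by
    intro s
    have hsX : s.map (Function.Embedding.subtype _) ⊆ X := by
      intro x hx
      obtain ⟨x, -, rfl⟩ := Finset.mem_map.mp hx
      exact x.2
    have hN : {y : V | ∃ x ∈ s.map (Function.Embedding.subtype _), G.Adj x y} =
        ↑(s.biUnion fun x => G.neighborFinset x) := by
      ext y
      simp
    simpa only [Finset.sum_map, Function.Embedding.coe_subtype, hN, Set.ncard_coe_finset] using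
      hHall _ hsX
  obtain ⟨g, hg, hgN⟩ :=
    Finset.exists_injective_sigma_of_sum_le_card_biUnion _ (fun x : (X : Set V) => f x) hall
  have hadj : ∀ p, G.Adj p.1 (g p) := fun p => (G.mem_neighborFinset _ _).mp (hgN p)
  have hout : ∀ p, g p ∉ X := fun p hpX => by
    rcases hbip _ _ (hadj p) with ⟨-, hY⟩ | ⟨hY, -⟩
    exacts [Finset.disjoint_left.mp hdisj hpX hY, Finset.disjoint_left.mp hdisj p.1.2 hY]
  obtain ⟨H, hXH, hcenter, hleaf⟩ := SimpleGraph.exists_subgraph_stars g hg hadj hout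
  exact ⟨H, hXH, hcenter, fun u hu huY => hleaf u hu (Finset.disjoint_right.mp hdisj huY)⟩

/-- Weighted Hall theorem: a star-matching with prescribed star sizes centered at `X`. -/
theorem stmt_4 {V : Type*} [Fintype V] [DecidableEq V] (G : SimpleGraph V)
    (X Y : Finset V) (hdisj : Disjoint X Y) (hcover : ∀ v : V, v ∈ X ∨ v ∈ Y)
    (hbip : ∀ u v : V, G.Adj u v → (u ∈ X ∧ v ∈ Y) ∨ (u ∈ Y ∧ v ∈ X))
    (f : V → ℕ) (hf : ∀ x ∈ X, 0 < f x)
    (hHall : ∀ S ⊆ X, (∑ v ∈ S, f v) ≤ {y : V | ∃ x ∈ S, G.Adj x y}.ncard) :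
    ∃ H : G.Subgraph, ↑X ⊆ H.verts ∧ (∀ v ∈ X, (H.neighborSet v).ncard = f v) ∧
      ∀ u ∈ H.verts, u ∈ Y → (H.neighborSet u).ncard = 1 :=
  stmt_4_general G X Y hdisj hbip f hHall
end

section
/- Let t ≥ 1 be a real number, G a t-tough graph on n ≥ 3 vertices, and C a cycle of G that is not hamiltonian. If a vertex x ∈ V(G) \ V(C) has more than n/(t+1) − 1 neighbors on C, then G has a cycle C′ with vertex set V(C) ∪ {x}. -/
open SimpleGraph

/-!
Suppose no cycle has vertex set `V(C) ∪ {x}`, and let `S` be the set of successors along `C`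
of the neighbours of `x` on `C`. Then `{x} ∪ S` is independent: an edge `x a⁺` lets `x` be
inserted between `a` and `a⁺`, and an edge `a⁺ b⁺` gives the cycle `x a … b⁺ a⁺ … b x`, where
`a … b⁺` runs backwards along `C`. Deleting the complement of an independent set `T` leaves `|T|`
isolated vertices, so toughness gives `(t + 1) |T| ≤ n`; for `T = {x} ∪ S` this contradicts the
degree bound. When `x` has no neighbour on `C`, the independent set `{x, c₀}` does the same job.
-/

namespace SimpleGraph

def HasCycleOn {V : Type*} (G : SimpleGraph V) (s : Set V) : Prop :=
  ∃ (z : V) (C : G.Walk z z), C.IsCycle ∧ {v : V | v ∈ C.support} = s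

namespace Walk

variable {V : Type*} {G : SimpleGraph V}

theorem IsPath.hasCycleOn_union_singleton {u v x : V} {p : G.Walk u v} (hp : p.IsPath)
    (huv : u ≠ v) (hx : x ∉ p.support) (hxu : G.Adj x u) (hvx : G.Adj v x) :
    G.HasCycleOn ({w | w ∈ p.support} ∪ {x}) := by
  refine ⟨x, cons hxu (p.concat hvx), (cons_isCycle_iff _ _).mpr ⟨hp.concat hx hvx, ?_⟩, ?_⟩
  · rw [edges_concat, List.concat_eq_append, List.mem_append, List.mem_singleton, Sym2.eq_iff]
    rintro (h | ⟨hxv, -⟩ | ⟨-, h⟩)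
    · exact hx (p.fst_mem_support_of_mem_edges h)
    · exact hvx.ne hxv.symm
    · exact huv h
  · ext w
    simp [support_concat, or_comm]

theorem exists_eq_append_cons_of_mem_darts {u v : V} {p : G.Walk u v} {d : G.Dart}
    (hd : d ∈ p.darts) :
    ∃ (q₁ : G.Walk u d.fst) (q₂ : G.Walk d.snd v), p = q₁.append (cons d.adj q₂) := by
  obtain ⟨q₁, q₂, rfl⟩ := (isSubwalk_toWalk_adj_iff_mem_darts p).mpr hd
  exact ⟨q₁, q₂, by rw [← append_assoc]; rfl⟩

/-- Pósa rotation of the path `u … b c … w` about the edge `c u`. -/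
theorem support_reverse_append_cons_perm {u b c w : V} (q₁ : G.Walk u b) (hbc : G.Adj b c)
    (q₂ : G.Walk c w) (hcu : G.Adj c u) :
    (q₂.reverse.append (cons hcu q₁)).support.Perm (q₁.append (cons hbc q₂)).support := by
  simpa [support_append] using (List.reverse_perm _).append_right _ |>.trans List.perm_append_comm

theorem mem_tail_support_iff_of_not_nil {v w : V} {c : G.Walk v v} (hc : ¬ c.Nil) :
    w ∈ c.support.tail ↔ w ∈ c.support := by
  rw [mem_support_iff]
  refine ⟨Or.inr, ?_⟩
  rintro (rfl | h)
  exacts [end_mem_tail_support hc, h]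

theorem exists_mem_darts_fst_eq_of_not_nil {v w : V} {c : G.Walk v v} (hc : ¬ c.Nil)
    (hw : w ∈ c.support) : ∃ d ∈ c.darts, d.fst = w := by
  rw [← c.dropLast_support_concat, List.mem_append, List.mem_singleton] at hw
  rcases hw with hw | rfl
  · simpa [← map_fst_darts] using hw
  · cases c with
    | nil => exact absurd nil_nil hc
    | cons h q => exact ⟨⟨_, h⟩, List.mem_cons_self .., rfl⟩

theorem IsCycle.fst_injOn_darts {v : V} {c : G.Walk v v} (hc : c.IsCycle) :
    Set.InjOn (·.fst) {d | d ∈ c.darts} := fun _ h₁ _ h₂ =>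
  List.inj_on_of_nodup_map (by rw [map_fst_darts]; exact hc.nodup_dropLast_support) h₁ h₂

theorem IsCycle.snd_injOn_darts {v : V} {c : G.Walk v v} (hc : c.IsCycle) :
    Set.InjOn (·.snd) {d | d ∈ c.darts} := fun _ h₁ _ h₂ =>
  List.inj_on_of_nodup_map (by rw [map_snd_darts]; exact hc.support_nodup) h₁ h₂

theorem IsCycle.ncard_image_snd_darts {v : V} {c : G.Walk v v} (hc : c.IsCycle) (P : V → Prop) :
    ((·.snd) '' {d | d ∈ c.darts ∧ P d.fst}).ncard = {w | w ∈ c.support ∧ P w}.ncard := by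
  have hfst : (·.fst) '' {d | d ∈ c.darts ∧ P d.fst} = {w | w ∈ c.support ∧ P w} := by
    ext w
    refine ⟨?_, fun ⟨hw, hPw⟩ => ?_⟩
    · rintro ⟨d, ⟨hd, hPd⟩, rfl⟩
      exact ⟨c.dart_fst_mem_support_of_mem_darts hd, hPd⟩
    · obtain ⟨d, hd, rfl⟩ := exists_mem_darts_fst_eq_of_not_nil hc.not_nil hw
      exact ⟨d, ⟨hd, hPw⟩, rfl⟩
  rw [← hfst, (hc.snd_injOn_darts.mono fun _ hd => hd.1).ncard_image,
    (hc.fst_injOn_darts.mono fun _ hd => hd.1).ncard_image]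

theorem IsCycle.exists_isPath_of_mem_darts {v : V} {c : G.Walk v v} (hc : c.IsCycle)
    {d : G.Dart} (hd : d ∈ c.darts) : ∃ p : G.Walk d.snd d.fst, p.IsPath ∧
      (∀ w, w ∈ p.support ↔ w ∈ c.support) ∧ c.darts.Perm (d :: p.darts) := by
  obtain ⟨q₁, q₂, rfl⟩ := exists_eq_append_cons_of_mem_darts hd
  have hperm : (q₂.append q₁).support.Perm (q₁.append (cons d.adj q₂)).support.tail := by
    simpa [tail_support_append, support_append] using List.perm_append_comm
  refine ⟨q₂.append q₁, (isPath_def _).mpr (hperm.nodup_iff.mpr hc.support_nodup),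
    fun w => hperm.mem_iff.trans (mem_tail_support_iff_of_not_nil hc.not_nil), ?_⟩
  simpa [darts_append] using List.perm_middle.trans (List.perm_append_comm.cons d)

section Extension

variable {v x : V} {c : G.Walk v v}

theorem IsCycle.hasCycleOn_of_adj_fst_of_adj_snd (hc : c.IsCycle) (hx : x ∉ c.support)
    {d : G.Dart} (hd : d ∈ c.darts) (hxa : G.Adj x d.fst) (hxb : G.Adj x d.snd) :
    G.HasCycleOn ({w | w ∈ c.support} ∪ {x}) := by
  obtain ⟨p, hp, hsupp, -⟩ := hc.exists_isPath_of_mem_darts hd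
  have hset : {w | w ∈ p.support} = {w | w ∈ c.support} := Set.ext hsupp
  rw [← hset]
  exact hp.hasCycleOn_union_singleton d.adj.ne.symm (by rwa [hsupp]) hxb hxa.symm

theorem IsCycle.hasCycleOn_of_adj_snd_snd (hc : c.IsCycle) (hx : x ∉ c.support)
    {d₁ d₂ : G.Dart} (hd₁ : d₁ ∈ c.darts) (hd₂ : d₂ ∈ c.darts) (hne : d₁.fst ≠ d₂.fst)
    (hx₁ : G.Adj x d₁.fst) (hx₂ : G.Adj x d₂.fst) (hsnd : G.Adj d₁.snd d₂.snd) :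
    G.HasCycleOn ({w | w ∈ c.support} ∪ {x}) := by
  obtain ⟨p, hp, hsupp, hdarts⟩ := hc.exists_isPath_of_mem_darts hd₁
  have hd₂p : d₂ ∈ p.darts := by
    rcases List.mem_cons.mp (hdarts.mem_iff.mp hd₂) with rfl | h
    exacts [absurd rfl hne, h]
  obtain ⟨q₁, q₂, rfl⟩ := exists_eq_append_cons_of_mem_darts hd₂p
  have hperm := support_reverse_append_cons_perm q₁ d₂.adj q₂ hsnd.symm
  set r := q₂.reverse.append (cons hsnd.symm q₁)
  have hset : {w | w ∈ r.support} = {w | w ∈ c.support} :=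
    Set.ext fun w => hperm.mem_iff.trans (hsupp w)
  rw [← hset]
  exact ((isPath_def r).mpr (hperm.nodup_iff.mpr hp.support_nodup)).hasCycleOn_union_singleton
    hne (by rwa [hperm.mem_iff, hsupp]) hx₁ hx₂.symm

theorem IsCycle.isIndepSet_insert_image_snd (hc : c.IsCycle) (hx : x ∉ c.support)
    (hext : ¬ G.HasCycleOn ({w | w ∈ c.support} ∪ {x})) :
    G.IsIndepSet (insert x ((·.snd) '' {d | d ∈ c.darts ∧ G.Adj x d.fst})) := by
  refine Set.Pairwise.insert ?_ ?_
  · rintro _ ⟨d₁, ⟨hd₁, hx₁⟩, rfl⟩ _ ⟨d₂, ⟨hd₂, hx₂⟩, rfl⟩ hne hadj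
    have hfst : d₁.fst ≠ d₂.fst := fun h => hne (congrArg (·.snd) (hc.fst_injOn_darts hd₁ hd₂ h))
    exact hext (hc.hasCycleOn_of_adj_snd_snd hx hd₁ hd₂ hfst hx₁ hx₂ hadj)
  · rintro _ ⟨d, ⟨hd, hxd⟩, rfl⟩ -
    have hnadj : ¬ G.Adj x d.snd := fun h =>
      hext (hc.hasCycleOn_of_adj_fst_of_adj_snd hx hd hxd h)
    exact ⟨hnadj, fun h => hnadj h.symm⟩

theorem IsCycle.exists_isIndepSet_of_not_hasCycleOn (hc : c.IsCycle) (hx : x ∉ c.support)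
    (hext : ¬ G.HasCycleOn ({w | w ∈ c.support} ∪ {x})) :
    ∃ T : Set V, G.IsIndepSet T ∧ 2 ≤ T.ncard ∧
      {w | w ∈ c.support ∧ G.Adj x w}.ncard + 1 ≤ T.ncard := by
  set N := {w | w ∈ c.support ∧ G.Adj x w}
  set S := (·.snd) '' {d | d ∈ c.darts ∧ G.Adj x d.fst}
  have hSN : S.ncard = N.ncard := hc.ncard_image_snd_darts (G.Adj x)
  rcases N.eq_empty_or_nonempty with hN | hN
  · have hxv : ¬ G.Adj x v := fun h => hN.subset ⟨c.start_mem_support, h⟩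
    have hxv' : x ≠ v := fun h => hx (h ▸ c.start_mem_support)
    refine ⟨{x, v}, Set.pairwise_pair.mpr fun _ => ⟨hxv, fun h => hxv h.symm⟩, ?_, ?_⟩ <;>
      simp [hN, Set.ncard_pair hxv']
  · have hNpos : 0 < N.ncard :=
      (Set.ncard_pos (c.support.finite_toSet.subset fun _ hw => hw.1)).mpr hN
    have hxS : x ∉ S := fun ⟨d, hd, hw⟩ =>
      hx (hw ▸ c.dart_snd_mem_support_of_mem_darts hd.1)
    have hcard : (insert x S).ncard = N.ncard + 1 := by
      rw [Set.ncard_insert_of_notMem hxS (Set.finite_of_ncard_pos (hSN ▸ hNpos)), hSN]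
    exact ⟨insert x S, hc.isIndepSet_insert_image_snd hx hext, by omega, hcard.ge⟩

end Extension

end Walk

end SimpleGraph

theorem numComp_compl_of_isIndepSet {V : Type*} {G : SimpleGraph V} {T : Set V}
    (hT : G.IsIndepSet T) : numComp G Tᶜ = T.ncard := by
  rw [numComp, compl_compl, ← Nat.card_coe_set_eq]
  refine (Nat.card_eq_of_bijective (G.induce T).connectedComponentMk
    ⟨fun a b hab => ?_, fun c => c.exists_rep⟩).symm
  obtain ⟨w⟩ := ConnectedComponent.eq.mp hab
  cases w with
  | nil => rfl
  | cons hadj _ => exact absurd (comap_adj.mp hadj) (hT (Subtype.coe_prop _) (Subtype.coe_prop _)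
      (Subtype.coe_injective.ne hadj.ne))

theorem Tough.add_one_mul_ncard_le {V : Type*} [Fintype V] {G : SimpleGraph V} {t : ℝ}
    (h : Tough t G) {T : Set V} (hT : G.IsIndepSet T) (hT₂ : 2 ≤ T.ncard) :
    (t + 1) * T.ncard ≤ Fintype.card V := by
  have hcomp := numComp_compl_of_isIndepSet hT
  have hcompl : (T.ncard : ℝ) + Tᶜ.ncard = Fintype.card V := by
    rw [← Nat.card_eq_fintype_card]; exact_mod_cast Set.ncard_add_ncard_compl T
  have htough := h Tᶜ (hcomp ▸ hT₂)
  rw [hcomp] at htough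
  linarith

theorem stmt_7_general {V : Type*} [Fintype V] (G : SimpleGraph V) (t : ℝ)
    (ht : 1 ≤ t) (htough : Tough t G)
    (c0 : V) (C : G.Walk c0 c0) (hC : C.IsCycle)
    (x : V) (hx : x ∉ C.support)
    (hdeg : (Fintype.card V : ℝ) / (t + 1) - 1 < ({v : V | v ∈ C.support ∧ G.Adj x v}.ncard : ℝ)) :
    ∃ (z : V) (C' : G.Walk z z), C'.IsCycle ∧
      {v : V | v ∈ C'.support} = {v : V | v ∈ C.support} ∪ {x} := by
  by_contra hext
  set N := {v : V | v ∈ C.support ∧ G.Adj x v}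
  obtain ⟨T, hT, hT₂, hNT⟩ := hC.exists_isIndepSet_of_not_hasCycleOn hx hext
  have ht₁ : 0 < t + 1 := by linarith
  have hdeg' : (Fintype.card V : ℝ) < (t + 1) * (N.ncard + 1) := by
    rwa [sub_lt_iff_lt_add, div_lt_iff₀ ht₁, mul_comm] at hdeg
  have hNT' : (N.ncard + 1 : ℝ) ≤ T.ncard := by exact_mod_cast hNT
  exact lt_irrefl _ <| calc
    (Fintype.card V : ℝ) < (t + 1) * (N.ncard + 1) := hdeg'
    _ ≤ (t + 1) * T.ncard := by gcongr
    _ ≤ Fintype.card V := htough.add_one_mul_ncard_le hT hT₂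

/-- If `C` is a nonhamiltonian cycle of a `t`-tough graph (`t ≥ 1`, `n ≥ 3`) and a vertex `x`
off `C` has more than `n/(t+1) − 1` neighbors on `C`, then `G` has a cycle on `V(C) ∪ {x}`. -/
theorem stmt_7 {V : Type*} [Fintype V] [DecidableEq V] (G : SimpleGraph V) (t : ℝ)
    (ht : 1 ≤ t) (htough : Tough t G) (hcard : 3 ≤ Fintype.card V)
    (c0 : V) (C : G.Walk c0 c0) (hC : C.IsCycle) (hnonham : ¬ ∀ v : V, v ∈ C.support)
    (x : V) (hx : x ∉ C.support)
    (hdeg : (Fintype.card V : ℝ) / (t + 1) - 1 < ({v : V | v ∈ C.support ∧ G.Adj x v}.ncard : ℝ)) :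
    ∃ (z : V) (C' : G.Walk z z), C'.IsCycle ∧
      {v : V | v ∈ C'.support} = {v : V | v ∈ C.support} ∪ {x} :=
  stmt_7_general G t ht htough c0 C hC x hx hdeg
end

section
/- Let G be a (P₃ ∪ P₁)-free graph on n ≥ 3 vertices with toughness strictly greater than 1. Then G is hamiltonian connected, i.e., between any two distinct vertices of G there is a hamiltonian path. -/
open SimpleGraph

/-!
Take a longest `u`–`v` path `P` and suppose that it misses a vertex `a`. Let `X` be the set of
vertices of `P` adjacent to the component `H` of `G − P` containing `a`. If two consecutive
vertices of `P` were in `X`, or the successors on `P` of two vertices of `X` were adjacent, a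
detour through `H` would give a longer path. In a `(P₃ ∪ P₁)`-free graph every component of
`G − X` not containing `a` is a clique, so the successors of the vertices of `X \ {v}` lie in
pairwise distinct components of `G − X`, none of which contains `a`. Hence
`c(G − X) ≥ |X|`, and also `c(G − X) ≥ 2`, contradicting toughness greater than `1`.
-/

theorem List.eq_take_append_getElem_cons_getElem_cons {α : Type*} (l : List α) {i : ℕ}
    (hi : i + 1 < l.length) : l = l.take i ++ l[i] :: l[i + 1] :: l.drop (i + 2) := by
  simp

theorem List.exists_eq_append_getElem_cons_append_getElem_cons {α : Type*} (l : List α)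
    {i j : ℕ} (hij : i + 1 < j) (hj : j + 1 < l.length) :
    ∃ A B C, l = A ++ l[i] :: l[i + 1] :: (B ++ l[j] :: l[j + 1] :: C) := by
  have h := (l.take j).eq_take_append_getElem_cons_getElem_cons (i := i) (by simp; omega)
  refine ⟨l.take i, (l.take j).drop (i + 2), l.drop (j + 2), ?_⟩
  conv_lhs => rw [l.eq_take_append_getElem_cons_getElem_cons hj, h]
  simp [List.take_take, Nat.min_eq_left (by omega : i ≤ j)]

theorem List.ncard_le_card_positions_add_one {α : Type*} {l : List α} {v : α}
    (hv : l.getLast? = some v) {X : Set α} (hX : X ⊆ {x | x ∈ l}) :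
    X.ncard ≤ Nat.card {i : Fin l.length // i.1 + 1 < l.length ∧ l[i] ∈ X} + 1 := by
  set g := fun i : {i : Fin l.length // i.1 + 1 < l.length ∧ l[i] ∈ X} => l[i.1]
  have hX' : X ⊆ Set.range g ∪ {v} := by
    intro x hx
    obtain ⟨k, hk, rfl⟩ := List.getElem_of_mem (hX hx)
    by_cases hk' : k + 1 < l.length
    · exact Or.inl ⟨⟨⟨k, hk⟩, hk', hx⟩, rfl⟩
    · obtain rfl : k = l.length - 1 := by omega
      exact Or.inr (by simpa [List.getLast?_eq_getElem?, List.getElem?_eq_getElem hk] using hv)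
  calc X.ncard ≤ (Set.range g ∪ {v}).ncard := Set.ncard_le_ncard hX'
    _ ≤ _ := by
      grw [Set.ncard_union_le, Set.ncard_singleton, ← Nat.card_coe_set_eq, Finite.card_range_le]

namespace SimpleGraph

variable {V : Type*} {G : SimpleGraph V}

theorem InducedFree.induce {W : Type*} {H : SimpleGraph W} (hG : InducedFree H G) (s : Set V) :
    InducedFree H (G.induce s) := fun ⟨f, hf⟩ =>
  hG ⟨f.trans (Function.Embedding.subtype _), by simpa using hf⟩

theorem Reachable.exists_induced_P3 {a b : V} (h : G.Reachable a b) (hne : a ≠ b)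
    (hadj : ¬G.Adj a b) :
    ∃ x y z, G.Reachable a x ∧ G.Adj x y ∧ G.Adj y z ∧ ¬G.Adj x z ∧ x ≠ z := by
  obtain ⟨p⟩ := h
  induction p with
  | nil => exact absurd rfl hne
  | @cons a c b hac q ih =>
    by_cases hcb : c = b
    · exact absurd (hcb ▸ hac) hadj
    by_cases hcb' : G.Adj c b
    · exact ⟨a, c, b, .rfl, hac, hcb', hadj, hne⟩
    · obtain ⟨x, y, z, hcx, h⟩ := ih hcb hcb'
      exact ⟨x, y, z, hac.reachable.trans hcx, h⟩

theorem InducedFree.reachable_of_induced_P3 (hG : InducedFree P3UnionP1 G) {x y z : V}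
    (hxy : G.Adj x y) (hyz : G.Adj y z) (hxz : ¬G.Adj x z) (hxz' : x ≠ z) (d : V) :
    G.Reachable x d := by
  by_contra hd
  have hfar : ∀ w, ¬G.Reachable w d → w ≠ d ∧ ¬G.Adj w d := fun w hw =>
    ⟨fun h => hw (h ▸ .rfl), fun h => hw h.reachable⟩
  have hry : ¬G.Reachable y d := fun h => hd (hxy.reachable.trans h)
  have hrz : ¬G.Reachable z d := fun h => hry (hyz.reachable.trans h)
  obtain ⟨hxd, hxd'⟩ := hfar x hd
  obtain ⟨hyd, hyd'⟩ := hfar y hry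
  obtain ⟨hzd, hzd'⟩ := hfar z hrz
  have hxy' := hxy.ne
  have hyz' := hyz.ne
  refine hG ⟨⟨![x, y, z, d], fun i j hij => ?_⟩, fun i j => ?_⟩
  · fin_cases i <;> fin_cases j <;> simp_all [eq_comm]
  · change G.Adj (![x, y, z, d] i) (![x, y, z, d] j) ↔ _
    fin_cases i <;> fin_cases j <;>
      simp [P3UnionP1, hxy, hyz, hxz, hxd', hyd', hzd', adj_comm]

theorem InducedFree.adj_of_reachable (hG : InducedFree P3UnionP1 G) {a b c : V}
    (hab : G.Reachable a b) (hne : a ≠ b) (hac : ¬G.Reachable a c) : G.Adj a b := by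
  by_contra hadj
  obtain ⟨x, y, z, hax, hxy, hyz, hxz, hxz'⟩ := hab.exists_induced_P3 hne hadj
  exact hac (hax.trans (hG.reachable_of_induced_P3 hxy hyz hxz hxz' c))

theorem exists_walk_support_eq {l : List V} {u v : V} (hl : l.IsChain G.Adj)
    (hu : l.head? = some u) (hv : l.getLast? = some v) : ∃ p : G.Walk u v, p.support = l := by
  have hne : l ≠ [] := by rintro rfl; simp at hu
  obtain rfl : l.head hne = u := by simpa [List.head?_eq_some_head hne] using hu
  obtain rfl : l.getLast hne = v := by simpa [List.getLast?_eq_some_getLast hne] using hv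
  exact ⟨Walk.ofSupport l hne hl, Walk.support_ofSupport hne hl⟩

namespace Walk

variable {u v a b : V}

theorem head?_support (p : G.Walk u v) : p.support.head? = some u := by
  rw [List.head?_eq_some_head p.support_ne_nil, head_support]

theorem getLast?_support (p : G.Walk u v) : p.support.getLast? = some v := by
  rw [List.getLast?_eq_some_getLast p.support_ne_nil, getLast_support]

theorem exists_isPath_length_gt_of_perm {p : G.Walk u v} {q : G.Walk a b} (hp : p.IsPath)
    (hq : q.IsPath) (hpq : p.support.Disjoint q.support) {l : List V} (hl : l.IsChain G.Adj)
    (hu : l.head? = some u) (hv : l.getLast? = some v) (hperm : l.Perm (p.support ++ q.support)) :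
    ∃ r : G.Walk u v, r.IsPath ∧ p.length < r.length := by
  obtain ⟨r, rfl⟩ := exists_walk_support_eq hl hu hv
  have hnodup := hperm.nodup_iff.mpr (hp.support_nodup.append hq.support_nodup hpq)
  refine ⟨r, IsPath.mk' hnodup, ?_⟩
  have := hperm.length_eq
  simp only [length_support, List.length_append] at this
  omega

theorem IsPath.exists_longer_of_insert {p : G.Walk u v} (hp : p.IsPath) {A B : List V} {x y : V}
    (hsupp : p.support = A ++ x :: y :: B) {q : G.Walk a b} (hq : q.IsPath)
    (hpq : p.support.Disjoint q.support) (hxa : G.Adj x a) (hby : G.Adj b y) :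
    ∃ r : G.Walk u v, r.IsPath ∧ p.length < r.length := by
  have hchain := p.isChain_adj_support
  have hu := p.head?_support
  have hv := p.getLast?_support
  rw [hsupp] at hchain hu hv
  refine exists_isPath_length_gt_of_perm hp hq hpq (l := A ++ x :: (q.support ++ y :: B))
    ?_ ?_ ?_ ?_
  · have hqc := q.isChain_adj_support
    simp [List.isChain_append, List.isChain_cons, q.head?_support, q.getLast?_support, hxa, hby,
      hqc] at hchain ⊢
    tauto
  · cases A <;> simpa using hu
  · simpa [List.getLast?_append, List.getLast?_cons] using hv
  · rw [hsupp]
    simpa using (List.perm_append_comm (l₁ := q.support) (l₂ := y :: B)).cons x |>.append_left A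

/-- Follow `p` to `x`, detour along `q` to `x'`, walk `p` backwards to `s`, and continue from `s'`
along `p`. -/
theorem IsPath.exists_longer_of_reroute {p : G.Walk u v} (hp : p.IsPath) {A B C : List V}
    {x s x' s' : V} (hsupp : p.support = A ++ x :: s :: (B ++ x' :: s' :: C)) {q : G.Walk a b}
    (hq : q.IsPath) (hpq : p.support.Disjoint q.support) (hxa : G.Adj x a) (hbx' : G.Adj b x')
    (hss' : G.Adj s s') :
    ∃ r : G.Walk u v, r.IsPath ∧ p.length < r.length := by
  have hchain := p.isChain_adj_support
  have hu := p.head?_support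
  have hv := p.getLast?_support
  rw [hsupp] at hchain hu hv
  refine exists_isPath_length_gt_of_perm hp hq hpq
    (l := A ++ x :: (q.support ++ x' :: ((s :: B).reverse ++ s' :: C))) ?_ ?_ ?_ ?_
  · have hqc := q.isChain_adj_support
    simp [List.isChain_append, List.isChain_cons, q.head?_support, q.getLast?_support, hxa, hbx',
      hqc, hss'] at hchain ⊢
    rcases B with _ | ⟨c, B⟩ <;>
      simp_all [G.adj_comm, List.getLast?_cons, -List.reverse_cons, List.isChain_reverse]
  · cases A <;> simpa using hu
  · simpa [List.getLast?_append, List.getLast?_cons] using hv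
  · classical
    rw [hsupp, List.perm_iff_count]
    intro w
    simp [List.count_append, List.count_cons]
    omega

end Walk

theorem two_le_numComp [Finite V] {S : Set V} {c₁ c₂ : (G.induce Sᶜ).ConnectedComponent}
    (h : c₁ ≠ c₂) : 2 ≤ numComp G S :=
  Finite.one_lt_card_iff_nontrivial.mpr ⟨c₁, c₂, h⟩

theorem two_le_numComp_empty [Finite V] (h : ¬G.Preconnected) : 2 ≤ numComp G ∅ := by
  obtain ⟨a, b, hab⟩ : ∃ a b, ¬G.Reachable a b := by simpa [Preconnected] using h
  refine two_le_numComp (c₁ := (G.induce ∅ᶜ).connectedComponentMk ⟨a, by simp⟩)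
    (c₂ := (G.induce ∅ᶜ).connectedComponentMk ⟨b, by simp⟩) fun h => hab ?_
  simpa using (ConnectedComponent.exact h).map (Embedding.induce _).toHom

structure Walk.IsLongestPath {u v : V} (p : G.Walk u v) : Prop where
  isPath : p.IsPath
  length_le : ∀ q : G.Walk u v, q.IsPath → q.length ≤ p.length

theorem Reachable.exists_isLongestPath [Finite V] {u v : V} (h : G.Reachable u v) :
    ∃ p : G.Walk u v, p.IsLongestPath := by
  classical
  have := Fintype.ofFinite V
  have : Nonempty (G.Path u v) := ⟨h.some.toPath⟩
  obtain ⟨p, hp⟩ := Finite.exists_max fun p : G.Path u v => p.1.length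
  exact ⟨p.1, p.2, fun q hq => hp ⟨q, hq⟩⟩

/-- The vertex set of the component of `G − S` containing `a` (empty if `a ∈ S`); its
neighbourhood in `S` is `attachments G S a`. -/
def reachableAvoiding (G : SimpleGraph V) (S : Set V) (a : V) : Set V :=
  {w | ∃ q : G.Walk a w, ∀ x ∈ q.support, x ∉ S}

def attachments (G : SimpleGraph V) (S : Set V) (a : V) : Set V :=
  {x ∈ S | ∃ h ∈ G.reachableAvoiding S a, G.Adj x h}

section Avoiding

variable {S : Set V} {a b c : V}

theorem notMem_of_mem_reachableAvoiding (hb : b ∈ G.reachableAvoiding S a) : b ∉ S :=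
  hb.elim fun q hq => hq b q.end_mem_support

theorem self_mem_reachableAvoiding (ha : a ∉ S) : a ∈ G.reachableAvoiding S a :=
  ⟨.nil, by simpa using ha⟩

theorem mem_reachableAvoiding_of_adj (hb : b ∈ G.reachableAvoiding S a) (hbc : G.Adj b c)
    (hc : c ∉ S) : c ∈ G.reachableAvoiding S a := by
  obtain ⟨q, hq⟩ := hb
  refine ⟨q.concat hbc, fun x hx => ?_⟩
  rw [Walk.support_concat, List.mem_append, List.mem_singleton] at hx
  exact hx.elim (hq x) fun h => h ▸ hc

theorem exists_isPath_of_mem_reachableAvoiding (hb : b ∈ G.reachableAvoiding S a)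
    (hc : c ∈ G.reachableAvoiding S a) :
    ∃ q : G.Walk b c, q.IsPath ∧ ∀ x ∈ q.support, x ∉ S := by
  classical
  obtain ⟨qb, hqb⟩ := hb
  obtain ⟨qc, hqc⟩ := hc
  refine ⟨(qb.reverse.append qc).bypass, Walk.bypass_isPath _, fun x hx => ?_⟩
  have := Walk.support_bypass_subset_support _ hx
  rw [Walk.mem_support_append_iff, Walk.support_reverse, List.mem_reverse] at this
  exact this.elim (hqb x) (hqc x)

theorem attachments_subset : G.attachments S a ⊆ S := fun _ hx => hx.1

theorem notMem_attachments (ha : a ∉ S) : a ∉ G.attachments S a := fun h => ha h.1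

theorem mem_reachableAvoiding_of_reachable {c d : ↥(G.attachments S a)ᶜ}
    (h : (G.induce (G.attachments S a)ᶜ).Reachable c d) (hc : ↑c ∈ G.reachableAvoiding S a) :
    ↑d ∈ G.reachableAvoiding S a := by
  obtain ⟨q⟩ := h
  induction q with
  | nil => exact hc
  | @cons c e d hce _ ih =>
    refine ih (mem_reachableAvoiding_of_adj hc (by simpa using hce) fun he => e.2 ⟨he, ?_⟩)
    exact ⟨c, hc, by simpa using hce.symm⟩

theorem connectedComponentMk_ne_of_mem (ha : a ∉ S) {c : ↥(G.attachments S a)ᶜ}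
    (hc : ↑c ∈ S) :
    (G.induce (G.attachments S a)ᶜ).connectedComponentMk c ≠
      (G.induce (G.attachments S a)ᶜ).connectedComponentMk
        ⟨a, notMem_attachments ha⟩ := fun h =>
  notMem_of_mem_reachableAvoiding
    (mem_reachableAvoiding_of_reachable (ConnectedComponent.exact h).symm
      (self_mem_reachableAvoiding ha)) hc

theorem InducedFree.adj_of_connectedComponentMk_eq (hG : InducedFree P3UnionP1 G) (ha : a ∉ S)
    {c d : ↥(G.attachments S a)ᶜ}
    (h : (G.induce (G.attachments S a)ᶜ).connectedComponentMk c =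
      (G.induce (G.attachments S a)ᶜ).connectedComponentMk d) (hne : c ≠ d)
    (hc : ↑c ∈ S) : G.Adj c d := by
  have := (hG.induce _).adj_of_reachable (ConnectedComponent.exact h) hne
    fun h' => connectedComponentMk_ne_of_mem ha hc (ConnectedComponent.sound h')
  simpa using this

end Avoiding

namespace Walk

variable {u v a : V} {p : G.Walk u v}

theorem IsLongestPath.getElem_succ_notMem_attachments (hp : p.IsLongestPath) {i : ℕ}
    (hi : i + 1 < p.support.length) (hx : p.support[i] ∈ G.attachments {w | w ∈ p.support} a) :
    p.support[i + 1] ∉ G.attachments {w | w ∈ p.support} a := by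
  rintro ⟨-, h₂, hh₂, hadj₂⟩
  obtain ⟨-, h₁, hh₁, hadj₁⟩ := hx
  obtain ⟨q, hq, hqS⟩ := exists_isPath_of_mem_reachableAvoiding hh₁ hh₂
  obtain ⟨r, hr, hlt⟩ := hp.isPath.exists_longer_of_insert
    (p.support.eq_take_append_getElem_cons_getElem_cons hi) hq
    (List.disjoint_right.mpr hqS) hadj₁ hadj₂.symm
  exact (hp.length_le r hr).not_gt hlt

theorem IsLongestPath.not_adj_getElem_succ (hp : p.IsLongestPath) {i j : ℕ} (hij : i < j)
    (hj : j + 1 < p.support.length) (hi : p.support[i] ∈ G.attachments {w | w ∈ p.support} a)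
    (hj' : p.support[j] ∈ G.attachments {w | w ∈ p.support} a) :
    ¬G.Adj p.support[i + 1] p.support[j + 1] := by
  intro hadj
  obtain rfl | hij := (Nat.succ_le_of_lt hij).eq_or_lt
  · exact hp.getElem_succ_notMem_attachments (by omega) hi hj'
  obtain ⟨A, B, C, hABC⟩ := p.support.exists_eq_append_getElem_cons_append_getElem_cons hij hj
  obtain ⟨-, h₁, hh₁, hadj₁⟩ := hi
  obtain ⟨-, h₂, hh₂, hadj₂⟩ := hj'
  obtain ⟨q, hq, hqS⟩ := exists_isPath_of_mem_reachableAvoiding hh₁ hh₂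
  obtain ⟨r, hr, hlt⟩ := hp.isPath.exists_longer_of_reroute hABC hq
    (List.disjoint_right.mpr hqS) hadj₁ hadj₂.symm hadj
  exact (hp.length_le r hr).not_gt hlt

theorem IsLongestPath.two_le_numComp_attachments [Finite V] (hp : p.IsLongestPath)
    (huv : u ≠ v) (ha : a ∉ p.support) :
    2 ≤ numComp G (G.attachments {w | w ∈ p.support} a) := by
  have hlen : 1 < p.support.length := by
    rw [length_support, Nat.lt_add_left_iff_pos]
    exact Nat.pos_of_ne_zero fun h => huv (p.eq_of_length_eq_zero h)
  obtain ⟨z, hz, hzX⟩ : ∃ z ∈ p.support, z ∉ G.attachments {w | w ∈ p.support} a := by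
    by_cases h₀ : p.support[0] ∈ G.attachments {w | w ∈ p.support} a
    · exact ⟨_, List.getElem_mem _, hp.getElem_succ_notMem_attachments hlen h₀⟩
    · exact ⟨_, List.getElem_mem _, h₀⟩
  have ha' : a ∉ ({w | w ∈ p.support} : Set V) := ha
  exact two_le_numComp (connectedComponentMk_ne_of_mem (c := ⟨z, hzX⟩) ha' hz)

theorem IsLongestPath.ncard_attachments_le_numComp [Finite V] (hG : InducedFree P3UnionP1 G)
    (hp : p.IsLongestPath) (ha : a ∉ p.support) :
    (G.attachments {w | w ∈ p.support} a).ncard ≤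
      numComp G (G.attachments {w | w ∈ p.support} a) := by
  have ha' : a ∉ ({w | w ∈ p.support} : Set V) := ha
  set X := G.attachments {w | w ∈ p.support} a
  let D := {i : Fin p.support.length // i.1 + 1 < p.support.length ∧ p.support[i] ∈ X}
  have hsucc (i : D) : p.support[i.1.1 + 1]'i.2.1 ∉ X :=
    hp.getElem_succ_notMem_attachments i.2.1 i.2.2
  let comp := (G.induce Xᶜ).connectedComponentMk
  let f : Option D → (G.induce Xᶜ).ConnectedComponent :=
    fun o => o.elim (comp ⟨a, notMem_attachments ha'⟩) fun i => comp ⟨_, hsucc i⟩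
  have hf_lt (i j : D) (hij : i.1 < j.1) : f (some i) ≠ f (some j) := fun h =>
    hp.not_adj_getElem_succ hij j.2.1 i.2.2 j.2.2 <|
      hG.adj_of_connectedComponentMk_eq ha' h
        (by simpa [hp.isPath.support_nodup.getElem_inj_iff, Fin.val_inj] using hij.ne)
        (List.getElem_mem _)
  have hf : f.Injective := by
    rintro (_ | i) (_ | j) h
    · rfl
    · exact absurd h.symm (connectedComponentMk_ne_of_mem ha' (List.getElem_mem _))
    · exact absurd h (connectedComponentMk_ne_of_mem ha' (List.getElem_mem _))
    · rcases lt_trichotomy i.1 j.1 with hij | hij | hij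
      · exact absurd h (hf_lt i j hij)
      · exact congrArg some (Subtype.ext hij)
      · exact absurd h.symm (hf_lt j i hij)
  calc X.ncard ≤ Nat.card D + 1 :=
        List.ncard_le_card_positions_add_one p.getLast?_support attachments_subset
    _ = Nat.card (Option D) := Finite.card_option.symm
    _ ≤ numComp G X := Nat.card_le_card_of_injective f hf

end Walk

end SimpleGraph

theorem stmt_8_general {V : Type*} [Fintype V] [DecidableEq V] (G : SimpleGraph V)
    (hfree : InducedFree P3UnionP1 G)
    (htough : ∀ S : Set V, 2 ≤ numComp G S → numComp G S < S.ncard) :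
    ∀ u v : V, u ≠ v → ∃ p : G.Walk u v, p.IsHamiltonian := by
  intro u v huv
  have hconn : G.Preconnected := by
    by_contra h
    simpa using htough ∅ (two_le_numComp_empty h)
  obtain ⟨p, hp⟩ := (hconn u v).exists_isLongestPath
  by_cases hall : ∀ w, w ∈ p.support
  · exact ⟨p, fun w => List.count_eq_one_of_mem hp.isPath.support_nodup (hall w)⟩
  obtain ⟨a, ha⟩ := not_forall.mp hall
  exact absurd (hp.ncard_attachments_le_numComp hfree ha)
    (htough _ (hp.two_le_numComp_attachments huv ha)).not_ge

/-- A `(P₃ ∪ P₁)`-free graph on `n ≥ 3` vertices with toughness greater than `1` is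
hamiltonian connected. -/
theorem stmt_8 {V : Type*} [Fintype V] [DecidableEq V] (G : SimpleGraph V)
    (hfree : InducedFree P3UnionP1 G) (hcard : 3 ≤ Fintype.card V)
    (htough : ∀ S : Set V, 2 ≤ numComp G S → numComp G S < S.ncard) :
    ∀ u v : V, u ≠ v → ∃ p : G.Walk u v, p.IsHamiltonian :=
  stmt_8_general G hfree htough
end

section
/- Let G be a (P₃ ∪ 2P₁)-free graph and S ⊆ V(G) a set with c(G − S) ≥ 4 such that every vertex of S has a neighbor in at least two components of G − S. Then for each vertex x ∈ S, there is at most one component D of G − S such that x fails to be adjacent to all vertices of D; i.e., x is adjacent to every vertex of all but at most one component of G − S. -/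
open SimpleGraph

lemma buildEmb {V : Type*} {G : SimpleGraph V} {v0 v1 v2 v3 v4 : V}
    (h01 : v0 ≠ v1) (h02 : v0 ≠ v2) (h03 : v0 ≠ v3) (h04 : v0 ≠ v4)
    (h12 : v1 ≠ v2) (h13 : v1 ≠ v3) (h14 : v1 ≠ v4)
    (h23 : v2 ≠ v3) (h24 : v2 ≠ v4) (h34 : v3 ≠ v4)
    (a01 : G.Adj v0 v1) (a12 : G.Adj v1 v2)
    (n02 : ¬ G.Adj v0 v2) (n03 : ¬ G.Adj v0 v3) (n04 : ¬ G.Adj v0 v4)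
    (n13 : ¬ G.Adj v1 v3) (n14 : ¬ G.Adj v1 v4)
    (n23 : ¬ G.Adj v2 v3) (n24 : ¬ G.Adj v2 v4) (n34 : ¬ G.Adj v3 v4) :
    ¬ InducedFree P3Union2P1 G := by
  intro h
  apply h
  refine ⟨⟨![v0, v1, v2, v3, v4], ?_⟩, ?_⟩
  · intro a b hab
    fin_cases a <;> fin_cases b <;> simp_all
  · intro a b
    fin_cases a <;> fin_cases b <;> simp [P3Union2P1] <;>
      first
      | exact G.irrefl
      | exact a01 | exact a12 | exact a01.symm | exact a12.symm
      | exact n02 | exact n03 | exact n04 | exact n13 | exact n14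
      | exact n23 | exact n24 | exact n34
      | exact fun hh => n02 hh.symm | exact fun hh => n03 hh.symm
      | exact fun hh => n04 hh.symm | exact fun hh => n13 hh.symm
      | exact fun hh => n14 hh.symm | exact fun hh => n23 hh.symm
      | exact fun hh => n24 hh.symm | exact fun hh => n34 hh.symm

lemma walk_boundary {V' : Type*} {G' : SimpleGraph V'} (P : V' → Prop) :
    ∀ {a b : V'} (_ : G'.Walk a b), P a → ¬ P b →
      ∃ u v, G'.Adj u v ∧ P u ∧ ¬ P v ∧ G'.Reachable a u := by
  intro a b w
  induction w with
  | nil => intro h h'; exact absurd h h'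
  | @cons u c d h w ih =>
    intro ha hb
    by_cases hc : P c
    · obtain ⟨u', v', hadj, hu', hv', hr⟩ := ih hc hb
      exact ⟨u', v', hadj, hu', hv', h.reachable.trans hr⟩
    · exact ⟨u, c, h, ha, hc, Reachable.refl _⟩

lemma cross_nonadj {V : Type*} (G : SimpleGraph V) (S : Set V) (u v : ↥Sᶜ)
    (h : (G.induce Sᶜ).connectedComponentMk u ≠ (G.induce Sᶜ).connectedComponentMk v) :
    ¬ G.Adj ↑u ↑v := by
  intro hadj
  exact h (ConnectedComponent.sound (Adj.reachable (by simpa using hadj)))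

lemma coe_ne_of_comp_ne {V : Type*} {G : SimpleGraph V} {S : Set V} {u v : ↥Sᶜ}
    (h : (G.induce Sᶜ).connectedComponentMk u ≠ (G.induce Sᶜ).connectedComponentMk v) :
    (↑u : V) ≠ ↑v :=
  fun h' => h (congrArg _ (Subtype.coe_injective h'))

lemma pick3 {α : Type*} [Finite α] (h : 4 ≤ Nat.card α) (e : α) :
    ∃ c₁ c₂ c₃ : α, c₁ ≠ c₂ ∧ c₁ ≠ c₃ ∧ c₂ ≠ c₃ ∧ c₁ ≠ e ∧ c₂ ≠ e ∧ c₃ ≠ e := by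
  classical
  haveI := Fintype.ofFinite α
  rw [Nat.card_eq_fintype_card] at h
  have hcard : 3 ≤ ({e} : Finset α)ᶜ.card := by
    rw [Finset.card_compl, Finset.card_singleton]
    omega
  obtain ⟨t, hts, ht3⟩ := Finset.exists_subset_card_eq hcard
  obtain ⟨a, b, c, hab, hac, hbc, rfl⟩ := Finset.card_eq_three.mp ht3
  have ha := hts (Finset.mem_insert_self a {b,c})
  have hb := hts (by simp : b ∈ ({a,b,c} : Finset α))
  have hc := hts (by simp : c ∈ ({a,b,c} : Finset α))
  simp only [Finset.mem_compl, Finset.mem_singleton] at ha hb hc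
  exact ⟨a, b, c, hab, hac, hbc, ha, hb, hc⟩

/-- In a `(P₃ ∪ 2P₁)`-free graph with `c(G − S) ≥ 4` in which every vertex of `S` has
neighbors in at least two components of `G − S`, every `x ∈ S` is adjacent to all vertices
of all but at most one component of `G − S`. -/
theorem stmt_16 {V : Type*} [Fintype V] (G : SimpleGraph V)
    (hfree : InducedFree P3Union2P1 G) (S : Set V) (hS : 4 ≤ numComp G S)
    (hnbr : ∀ x ∈ S, ∃ D₁ D₂ : (G.induce Sᶜ).ConnectedComponent, D₁ ≠ D₂ ∧
      (∃ w ∈ D₁.supp, G.Adj x ↑w) ∧ (∃ w ∈ D₂.supp, G.Adj x ↑w)) :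
    ∀ x ∈ S, ∀ D₁ D₂ : (G.induce Sᶜ).ConnectedComponent,
      (∃ w ∈ D₁.supp, ¬ G.Adj x ↑w) → (∃ w ∈ D₂.supp, ¬ G.Adj x ↑w) → D₁ = D₂ := by
  classical
  haveI : Finite (G.induce Sᶜ).ConnectedComponent :=
    Finite.of_surjective (G.induce Sᶜ).connectedComponentMk
      (fun C => C.exists_rep)
  rintro x hx D₁ D₂ ⟨w₁, hw₁, hnw₁⟩ ⟨w₂, hw₂, hnw₂⟩
  by_contra hD
  have hxS : ∀ (w : ↥Sᶜ), x ≠ ↑w := fun w h => w.2 (h ▸ hx)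
  rw [ConnectedComponent.mem_supp_iff] at hw₁ hw₂
  by_cases hdom : ∃ E E' : (G.induce Sᶜ).ConnectedComponent, E ≠ E' ∧
      (∀ w ∈ E.supp, G.Adj x ↑w) ∧ (∀ w ∈ E'.supp, G.Adj x ↑w)
  · -- Case A: two fully dominated components
    obtain ⟨E, E', hEE, hE, hE'⟩ := hdom
    obtain ⟨a, ha0⟩ := E.exists_rep
    obtain ⟨a', ha0'⟩ := E'.exists_rep
    have ha : (G.induce Sᶜ).connectedComponentMk a = E := ha0
    have ha' : (G.induce Sᶜ).connectedComponentMk a' = E' := ha0'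
    have hxa : G.Adj x ↑a := hE a (ConnectedComponent.mem_supp_iff _ _ |>.mpr ha)
    have hxa' : G.Adj x ↑a' := hE' a' (ConnectedComponent.mem_supp_iff _ _ |>.mpr ha')
    have hED₁ : E ≠ D₁ := fun h => hnw₁ (hE w₁ (by rw [ConnectedComponent.mem_supp_iff, hw₁, h]))
    have hED₂ : E ≠ D₂ := fun h => hnw₂ (hE w₂ (by rw [ConnectedComponent.mem_supp_iff, hw₂, h]))
    have hE'D₁ : E' ≠ D₁ := fun h => hnw₁ (hE' w₁ (by rw [ConnectedComponent.mem_supp_iff, hw₁, h]))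
    have hE'D₂ : E' ≠ D₂ := fun h => hnw₂ (hE' w₂ (by rw [ConnectedComponent.mem_supp_iff, hw₂, h]))
    refine buildEmb (v0 := (↑a : V)) (v1 := x) (v2 := ↑a') (v3 := ↑w₁) (v4 := ↑w₂)
      ?_ ?_ ?_ ?_ ?_ ?_ ?_ ?_ ?_ ?_ hxa.symm hxa' ?_ ?_ ?_ hnw₁ hnw₂ ?_ ?_ ?_ hfree
    · exact (hxS a).symm
    · exact coe_ne_of_comp_ne (by rw [ha, ha']; exact hEE)
    · exact coe_ne_of_comp_ne (by rw [ha, hw₁]; exact hED₁)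
    · exact coe_ne_of_comp_ne (by rw [ha, hw₂]; exact hED₂)
    · exact hxS a'
    · exact hxS w₁
    · exact hxS w₂
    · exact coe_ne_of_comp_ne (by rw [ha', hw₁]; exact hE'D₁)
    · exact coe_ne_of_comp_ne (by rw [ha', hw₂]; exact hE'D₂)
    · exact coe_ne_of_comp_ne (by rw [hw₁, hw₂]; exact hD)
    · exact cross_nonadj G S _ _ (by rw [ha, ha']; exact hEE)
    · exact cross_nonadj G S _ _ (by rw [ha, hw₁]; exact hED₁)
    · exact cross_nonadj G S _ _ (by rw [ha, hw₂]; exact hED₂)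
    · exact cross_nonadj G S _ _ (by rw [ha', hw₁]; exact hE'D₁)
    · exact cross_nonadj G S _ _ (by rw [ha', hw₂]; exact hE'D₂)
    · exact cross_nonadj G S _ _ (by rw [hw₁, hw₂]; exact hD)
  · -- Case B: at most one fully dominated component
    have hdom' : ∀ E E' : (G.induce Sᶜ).ConnectedComponent,
        (∀ w ∈ E.supp, G.Adj x ↑w) → (∀ w ∈ E'.supp, G.Adj x ↑w) → E = E' := by
      intro E E' hE hE'
      by_contra h
      exact hdom ⟨E, E', h, hE, hE'⟩
    obtain ⟨E₁, E₂, hE12, ⟨a₁, ha₁, hxa₁⟩, ⟨a₂, ha₂, hxa₂⟩⟩ := hnbr x hx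
    have key : ∃ (E : (G.induce Sᶜ).ConnectedComponent) (a : ↥Sᶜ), a ∈ E.supp ∧
        G.Adj x ↑a ∧ ∃ p ∈ E.supp, ¬ G.Adj x ↑p := by
      by_cases h1 : ∀ w ∈ E₁.supp, G.Adj x ↑w
      · have h2 : ¬ ∀ w ∈ E₂.supp, G.Adj x ↑w := fun h2 => hE12 (hdom' _ _ h1 h2)
        push_neg at h2
        exact ⟨E₂, a₂, ha₂, hxa₂, h2⟩
      · push_neg at h1
        exact ⟨E₁, a₁, ha₁, hxa₁, h1⟩
    obtain ⟨E, a, haE, hxa, p, hpE, hxp⟩ := key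
    rw [ConnectedComponent.mem_supp_iff] at haE hpE
    obtain ⟨w⟩ := ConnectedComponent.exact (haE.trans hpE.symm)
    obtain ⟨u, v, huv, hxu, hxv, hru⟩ :=
      walk_boundary (fun y : ↥Sᶜ => G.Adj x ↑y) w hxa hxp
    have huE : (G.induce Sᶜ).connectedComponentMk u = E := by
      rw [← haE]; exact (ConnectedComponent.sound hru).symm
    have hvE : (G.induce Sᶜ).connectedComponentMk v = E := by
      rw [← huE]; exact (ConnectedComponent.sound huv.reachable).symm
    obtain ⟨C₁, C₂, C₃, h12, h13, h23, h1E, h2E, h3E⟩ := pick3 hS E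
    have notdom : ∀ C C' : (G.induce Sᶜ).ConnectedComponent, C ≠ C' →
        (∀ w ∈ C.supp, G.Adj x ↑w) → ∃ q ∈ C'.supp, ¬ G.Adj x ↑q := by
      intro C C' hCC hC
      by_contra h
      push_neg at h
      exact hCC (hdom' _ _ hC (by simpa using h))
    have key2 : ∃ F F' : (G.induce Sᶜ).ConnectedComponent, F ≠ F' ∧ F ≠ E ∧ F' ≠ E ∧
        (∃ q ∈ F.supp, ¬ G.Adj x ↑q) ∧ (∃ q ∈ F'.supp, ¬ G.Adj x ↑q) := by
      by_cases d1 : ∀ w ∈ C₁.supp, G.Adj x ↑w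
      · exact ⟨C₂, C₃, h23, h2E, h3E, notdom _ _ h12 d1, notdom _ _ h13 d1⟩
      · push_neg at d1
        by_cases d2 : ∀ w ∈ C₂.supp, G.Adj x ↑w
        · exact ⟨C₁, C₃, h13, h1E, h3E, d1, notdom _ _ h23 d2⟩
        · push_neg at d2
          exact ⟨C₁, C₂, h12, h1E, h2E, d1, d2⟩
    obtain ⟨F, F', hFF, hFE, hF'E, ⟨p', hp'F, hxp'⟩, ⟨q, hqF', hxq⟩⟩ := key2
    rw [ConnectedComponent.mem_supp_iff] at hp'F hqF'
    have hadj_uv : G.Adj ↑u ↑v := by simpa using huv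
    refine buildEmb (v0 := (↑v : V)) (v1 := ↑u) (v2 := x) (v3 := ↑p') (v4 := ↑q)
      ?_ ?_ ?_ ?_ ?_ ?_ ?_ (hxS p') (hxS q) ?_ hadj_uv.symm hxu.symm
      (fun h => hxv h.symm) ?_ ?_ ?_ ?_ hxp' hxq ?_ hfree
    · exact fun h => huv.ne' (Subtype.coe_injective h)
    · exact (hxS v).symm
    · exact coe_ne_of_comp_ne (by rw [hvE, hp'F]; exact fun h => hFE h.symm)
    · exact coe_ne_of_comp_ne (by rw [hvE, hqF']; exact fun h => hF'E h.symm)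
    · exact (hxS u).symm
    · exact coe_ne_of_comp_ne (by rw [huE, hp'F]; exact fun h => hFE h.symm)
    · exact coe_ne_of_comp_ne (by rw [huE, hqF']; exact fun h => hF'E h.symm)
    · exact coe_ne_of_comp_ne (by rw [hp'F, hqF']; exact hFF)
    · exact cross_nonadj G S _ _ (by rw [hvE, hp'F]; exact fun h => hFE h.symm)
    · exact cross_nonadj G S _ _ (by rw [hvE, hqF']; exact fun h => hF'E h.symm)
    · exact cross_nonadj G S _ _ (by rw [huE, hp'F]; exact fun h => hFE h.symm)
    · exact cross_nonadj G S _ _ (by rw [huE, hqF']; exact fun h => hF'E h.symm)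
    · exact cross_nonadj G S _ _ (by rw [hp'F, hqF']; exact hFF)
end

section
/- Let D be a graph, W ⊆ V(D) a cutset such that every component of D − W is a complete graph, c(D − W) ≥ 3, and every vertex of W is adjacent to every vertex of D − W (the bipartite graph between W and V(D) \ W is complete). Let a, b be distinct vertices of D with a, b ∈ W ∪ V(D − W). If c(D − W) ≥ |W| + 1, then there exists a path in D from a to b containing all vertices of W and all vertices of any prescribed |W| − 1 components of D − W (when a, b ∈ W). -/
/-!
Enumerate `W \ {b}` as `a = w₀, w₁, …, wₖ` and pair the `wᵢ` injectively with components
`Cᵢ` of `G − W`; since `|F| = |W| − 1` the pairing can be chosen to hit exactly `F`. The vertex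
sequence `w₀, C₀, w₁, C₁, …, wₖ, Cₖ, b` is then a path: consecutive vertices inside a `Cᵢ` are
adjacent because `Cᵢ` is a clique, and every other step joins `W` to `V \ W`.
-/

open SimpleGraph

theorem Set.Finite.exists_nodup_cons_mem_iff {α : Type*} {s : Set α} (hs : s.Finite) {a : α}
    (ha : a ∈ s) : ∃ l : List α, (a :: l).Nodup ∧ ∀ x, x ∈ a :: l ↔ x ∈ s := by
  refine ⟨(hs.sdiff (t := {a})).toFinset.toList, ?_, fun x => ?_⟩
  · simp [List.nodup_cons, Finset.nodup_toList]
  · by_cases hx : x = a <;> simp [hx, ha]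

namespace SimpleGraph

variable {V : Type*} {G : SimpleGraph V}

theorem IsClique.isChain_toList {s : Finset V} (h : G.IsClique (s : Set V)) :
    s.toList.IsChain G.Adj :=
  (s.nodup_toList.pairwise_of_forall_ne fun _ hx _ hy hxy =>
    h (Finset.mem_toList.1 hx) (Finset.mem_toList.1 hy) hxy).isChain

section Thread

variable (K : V → Finset V)

noncomputable def threadBlocks (ws : List V) (b : V) : List (List V) :=
  ws.map (fun w => w :: (K w).toList) ++ [[b]]

variable {K} {W : Set V} {ws : List V} {b : V}

theorem mem_flatten_threadBlocks {v : V} :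
    v ∈ (threadBlocks K ws b).flatten ↔ v = b ∨ ∃ w ∈ ws, v = w ∨ v ∈ K w := by
  simp [threadBlocks, or_comm]

theorem isChain_flatten_threadBlocks (hbip : ∀ w ∈ W, ∀ v ∉ W, G.Adj w v) (hb : b ∈ W)
    (hws : ∀ w ∈ ws, w ∈ W)
    (hK : ∀ w ∈ ws, (K w).Nonempty ∧ G.IsClique (K w : Set V) ∧ ∀ v ∈ K w, v ∉ W) :
    (threadBlocks K ws b).flatten.IsChain G.Adj := by
  have head_mem : ∀ l ∈ threadBlocks K ws b, ∀ y ∈ l.head?, y ∈ W := by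
    simp only [threadBlocks, List.mem_append, List.mem_map, List.mem_singleton]
    rintro _ (⟨w, hw, rfl⟩ | rfl) y hy <;> simp only [List.head?_cons, Option.mem_def,
      Option.some.injEq] at hy <;> subst hy
    exacts [hws _ hw, hb]
  have last_not_mem : ∀ l ∈ ws.map (fun w => w :: (K w).toList), ∀ x ∈ l.getLast?, x ∉ W := by
    simp only [List.mem_map]
    rintro _ ⟨w, hw, rfl⟩ x hx
    rw [List.getLast?_cons_of_ne_nil (by simpa using (hK w hw).1.ne_empty)] at hx
    exact (hK w hw).2.2 x (by simpa using List.mem_of_getLast? hx)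
  have link : ∀ l₁ ∈ ws.map (fun w => w :: (K w).toList), ∀ l₂ ∈ threadBlocks K ws b,
      ∀ x ∈ l₁.getLast?, ∀ y ∈ l₂.head?, G.Adj x y := fun l₁ h₁ l₂ h₂ x hx y hy =>
    (hbip y (head_mem l₂ h₂ y hy) x (last_not_mem l₁ h₁ x hx)).symm
  rw [List.isChain_flatten (by simp [threadBlocks])]
  refine ⟨?_, List.Pairwise.isChain ?_⟩
  · simp only [threadBlocks, List.mem_append, List.mem_map, List.mem_singleton]
    rintro _ (⟨w, hw, rfl⟩ | rfl)
    · refine (hK w hw).2.1.isChain_toList.cons fun y hy => hbip w (hws w hw) y ?_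
      exact (hK w hw).2.2 y (by simpa using List.mem_of_mem_head? hy)
    · exact List.isChain_singleton b
  · rw [threadBlocks, List.pairwise_append]
    refine ⟨List.pairwise_of_forall_mem_list fun l₁ h₁ l₂ h₂ => link l₁ h₁ l₂ ?_,
      List.pairwise_singleton _ _, fun l₁ h₁ l₂ h₂ => link l₁ h₁ l₂ ?_⟩ <;>
      simp [threadBlocks, *]

theorem nodup_flatten_threadBlocks (hb : b ∈ W) (hws : ∀ w ∈ ws, w ∈ W)
    (hK : ∀ w ∈ ws, ∀ v ∈ K w, v ∉ W) (hnd : ws.Nodup) (hbws : b ∉ ws)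
    (hdisj : ∀ w ∈ ws, ∀ w' ∈ ws, w ≠ w' → Disjoint (K w) (K w')) :
    (threadBlocks K ws b).flatten.Nodup := by
  have not_mem_K : ∀ w ∈ ws, ∀ x ∈ W, x ∉ K w := fun w hw x hx hxK => hK w hw x hxK hx
  rw [List.nodup_flatten, threadBlocks, List.pairwise_append, List.pairwise_map]
  refine ⟨?_, hnd.imp_of_mem fun hw hw' hne => ?_, List.pairwise_singleton _ _, ?_⟩
  · simp only [List.mem_append, List.mem_map, List.mem_singleton]
    rintro _ (⟨w, hw, rfl⟩ | rfl)
    · exact List.nodup_cons.2 ⟨by simpa using not_mem_K w hw w (hws w hw), (K w).nodup_toList⟩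
    · exact List.nodup_singleton b
  · rw [List.disjoint_left]
    intro x hx hx'
    simp only [List.mem_cons, Finset.mem_toList] at hx hx'
    rcases hx with rfl | hx <;> rcases hx' with rfl | hx'
    exacts [hne rfl, not_mem_K _ hw' x (hws x hw) hx', not_mem_K _ hw x (hws x hw') hx,
      Finset.disjoint_left.1 (hdisj _ hw _ hw' hne) hx hx']
  · simp only [List.mem_map, List.mem_singleton]
    rintro _ ⟨w, hw, rfl⟩ _ rfl
    simp only [List.disjoint_singleton, List.mem_cons, Finset.mem_toList, not_or]
    exact ⟨fun h => hbws (h ▸ hw), not_mem_K w hw b hb⟩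

theorem exists_isPath_through_cliques (hbip : ∀ w ∈ W, ∀ v ∉ W, G.Adj w v) {S : Set V}
    (hS : S.Finite) (hSW : S ⊆ W) {a : V} (ha : a ∈ S) (hb : b ∈ W) (hbS : b ∉ S)
    (hK : ∀ w ∈ S, (K w).Nonempty ∧ G.IsClique (K w : Set V) ∧ ∀ v ∈ K w, v ∉ W)
    (hdisj : S.PairwiseDisjoint K) :
    ∃ p : G.Walk a b, p.IsPath ∧ ∀ v, v ∈ p.support ↔ v = b ∨ ∃ w ∈ S, v = w ∨ v ∈ K w := by
  obtain ⟨ws, hnd, hmem⟩ := hS.exists_nodup_cons_mem_iff ha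
  have hws : ∀ w ∈ a :: ws, w ∈ W := fun w hw => hSW ((hmem w).1 hw)
  have hK' : ∀ w ∈ a :: ws, _ := fun w hw => hK w ((hmem w).1 hw)
  set L := (threadBlocks K (a :: ws) b).flatten
  have hL : L ≠ [] := by simp [L, threadBlocks]
  have hchain : L.IsChain G.Adj := isChain_flatten_threadBlocks hbip hb hws hK'
  refine ⟨(Walk.ofSupport L hL hchain).copy (by simp [L, threadBlocks])
    (by simp [L, threadBlocks]), ?_, fun v => ?_⟩
  · rw [Walk.isPath_copy, Walk.isPath_def, Walk.support_ofSupport]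
    exact nodup_flatten_threadBlocks hb hws (fun w hw => (hK' w hw).2.2) hnd
      (fun h => hbS ((hmem b).1 h))
      fun w hw w' hw' hne => hdisj ((hmem w).1 hw) ((hmem w').1 hw') hne
  · rw [Walk.support_copy, Walk.support_ofSupport, mem_flatten_threadBlocks]
    simp only [hmem]

end Thread

section InducedComponents

variable {W : Set V}

theorem isClique_image_val_supp
    (hcomp : ∀ u v : W, u ≠ v → (G.induce W).Reachable u v → (G.induce W).Adj u v)
    (c : (G.induce W).ConnectedComponent) : G.IsClique (Subtype.val '' c.supp) := by
  rintro _ ⟨u, hu, rfl⟩ _ ⟨v, hv, rfl⟩ hne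
  exact hcomp u v (fun h => hne (congrArg _ h)) (ConnectedComponent.exact (hu.trans hv.symm))

theorem disjoint_image_val_supp {c c' : (G.induce W).ConnectedComponent} (h : c ≠ c') :
    Disjoint (Subtype.val '' c.supp) (Subtype.val '' c'.supp) :=
  (Set.disjoint_image_iff Subtype.val_injective).2 (pairwise_disjoint_supp_connectedComponent _ h)

theorem exists_isPath_through_components [Finite V]
    (hcomp : ∀ u v : ↥(Wᶜ), u ≠ v → (G.induce Wᶜ).Reachable u v → (G.induce Wᶜ).Adj u v)
    (hbip : ∀ w ∈ W, ∀ v ∉ W, G.Adj w v) {a b : V} (ha : a ∈ W) (hb : b ∈ W) (hab : a ≠ b)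
    {f : V → (G.induce Wᶜ).ConnectedComponent} (hf : (W \ {b}).InjOn f) :
    ∃ p : G.Walk a b, p.IsPath ∧ (∀ w ∈ W, w ∈ p.support) ∧
      ∀ w ∈ W \ {b}, ∀ v ∈ (f w).supp, ↑v ∈ p.support := by
  let K : V → Finset V := fun w => (Set.toFinite (Subtype.val '' (f w).supp)).toFinset
  have mem_K {w : V} {v : V} : v ∈ K w ↔ v ∈ Subtype.val '' (f w).supp :=
    Set.Finite.mem_toFinset _
  obtain ⟨p, hp, hsupp⟩ := exists_isPath_through_cliques (K := K) (S := W \ {b}) hbip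
    (Set.toFinite _) Set.sdiff_subset ⟨ha, hab⟩ hb (fun h => h.2 rfl)
    (fun w _ => ⟨by simpa [K] using (f w).nonempty_supp,
      by simpa [K] using isClique_image_val_supp hcomp (f w),
      fun v hv => by obtain ⟨u, -, rfl⟩ := mem_K.1 hv; exact u.2⟩)
    (fun w hw w' hw' hne => by
      simpa [K, Function.onFun] using disjoint_image_val_supp (hf.ne hw hw' hne))
  refine ⟨p, hp, fun w hw => (hsupp w).2 ?_, fun w hw v hv => (hsupp v).2 ?_⟩
  · by_cases hwb : w = b
    · exact Or.inl hwb
    · exact Or.inr ⟨w, ⟨hw, hwb⟩, Or.inl rfl⟩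
  · exact Or.inr ⟨w, hw, Or.inr (mem_K.2 ⟨v, hv, rfl⟩)⟩

end InducedComponents

end SimpleGraph

theorem stmt_19_general {V : Type*} [Fintype V] (G : SimpleGraph V)
    (W : Set V)
    (hcomp : ∀ u v : ↥(Wᶜ), u ≠ v → (G.induce Wᶜ).Reachable u v → (G.induce Wᶜ).Adj u v)
    (hbip : ∀ w ∈ W, ∀ v ∉ W, G.Adj w v)
    (a b : V) (ha : a ∈ W) (hb : b ∈ W) (hab : a ≠ b)
    (F : Set ((G.induce Wᶜ).ConnectedComponent)) (hF : F.ncard = W.ncard - 1) :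
    ∃ p : G.Walk a b, p.IsPath ∧ (∀ w ∈ W, w ∈ p.support) ∧
      ∀ c ∈ F, ∀ v ∈ c.supp, ↑v ∈ p.support := by
  have hcard : (W \ {b}).encard = F.encard := by
    rw [← (Set.toFinite _).cast_ncard_eq, ← F.toFinite.cast_ncard_eq,
      Set.ncard_sdiff_singleton_of_mem hb, hF]
  have hFne : F.Nonempty := by
    rw [← Set.encard_pos, ← hcard]
    exact Set.encard_pos.2 ⟨a, ha, hab⟩
  have : Nonempty (G.induce Wᶜ).ConnectedComponent := ⟨hFne.some⟩
  obtain ⟨f, hf⟩ := (Set.toFinite (W \ {b})).exists_bijOn_of_encard_eq hcard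
  obtain ⟨p, hp, hW, hcomps⟩ := exists_isPath_through_components hcomp hbip ha hb hab hf.injOn
  refine ⟨p, hp, hW, fun c hc v hv => ?_⟩
  obtain ⟨w, hw, rfl⟩ := hf.surjOn hc
  exact hcomps w hw v hv

/-- Threading a path through `W` and prescribed components: if every component of `D − W`
is complete, `c(D − W) ≥ 3`, the bipartite graph between `W` and the rest is complete, and
`c(D − W) ≥ |W| + 1`, then for distinct `a, b ∈ W` and any prescribed family of `|W| − 1`
components there is an `a`–`b` path covering `W` and those components. -/
theorem stmt_19 {V : Type*} [Fintype V] [DecidableEq V] (G : SimpleGraph V)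
    (W : Set V)
    (hcomp : ∀ u v : ↥(Wᶜ), u ≠ v → (G.induce Wᶜ).Reachable u v → (G.induce Wᶜ).Adj u v)
    (hc3 : 3 ≤ numComp G W)
    (hbip : ∀ w ∈ W, ∀ v ∉ W, G.Adj w v)
    (hcW : W.ncard + 1 ≤ numComp G W)
    (a b : V) (ha : a ∈ W) (hb : b ∈ W) (hab : a ≠ b)
    (F : Set ((G.induce Wᶜ).ConnectedComponent)) (hF : F.ncard = W.ncard - 1) :
    ∃ p : G.Walk a b, p.IsPath ∧ (∀ w ∈ W, w ∈ p.support) ∧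
      ∀ c ∈ F, ∀ v ∈ c.supp, ↑v ∈ p.support :=
  stmt_19_general G W hcomp hbip a b ha hb hab F hF
end
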